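/- arXiv:2206.05622 — 4 statements merged into one kernel-verified Lean document; each statement's English description precedes it below -/
import Mathlib

section
/- For every real λ < 0 and every real x > 0, the second iterate satisfies f_λ(f_λ(x)) < x, where f_λ(x) = λ/(1 − e^{−2x}). -/
/-!
Write `D = 1 - e^{-2x} > 0` and `y = f_λ(x) = λ / D < 0`. The tangent-line bound
`e^t ≥ 1 + t` gives `1 - e^{-2t} ≤ 2t` for every `t`, strictly for `t ≠ 0`. At `t = y` both sides
are negative, so `f_λ(y) = λ / (1 - e^{-2y}) ≤ λ / (2y) = D / 2`; at `t = x` it gives `D / 2 < x`.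
-/

open Real

lemma one_sub_exp_neg_two_mul_le (t : ℝ) : 1 - exp (-2 * t) ≤ 2 * t := by
  linarith [add_one_le_exp (-2 * t)]

lemma one_sub_exp_neg_two_mul_lt {t : ℝ} (ht : t ≠ 0) : 1 - exp (-2 * t) < 2 * t := by
  linarith [add_one_lt_exp (mul_ne_zero (by norm_num : (-2 : ℝ) ≠ 0) ht)]

lemma one_sub_exp_neg_two_mul_pos {t : ℝ} (ht : 0 < t) : 0 < 1 - exp (-2 * t) := by
  rw [sub_pos, exp_lt_one_iff]
  linarith

lemma div_one_sub_exp_neg_two_mul_le {lam y : ℝ} (hlam : lam ≤ 0) (hy : y < 0) :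
    lam / (1 - exp (-2 * y)) ≤ lam / (2 * y) := by
  have h := one_div_le_one_div_of_neg_of_le (by linarith) (one_sub_exp_neg_two_mul_le y)
  simpa only [div_eq_mul_one_div lam] using mul_le_mul_of_nonpos_left h hlam

/-- For every real λ < 0 and x > 0, f_λ(f_λ(x)) < x where f_λ(x) = λ/(1 − e^{−2x}). -/
theorem second_iterate_decreasing (lam x : ℝ) (hlam : lam < 0) (hx : 0 < x) :
    lam / (1 - Real.exp (-2 * (lam / (1 - Real.exp (-2 * x))))) < x := by
  set D := 1 - exp (-2 * x)
  have hD_pos : 0 < D := one_sub_exp_neg_two_mul_pos hx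
  calc lam / (1 - exp (-2 * (lam / D)))
      ≤ lam / (2 * (lam / D)) :=
        div_one_sub_exp_neg_two_mul_le hlam.le (div_neg_of_neg_of_pos hlam hD_pos)
    _ = D / 2 := by field_simp [hlam.ne]
    _ < x := by linarith [one_sub_exp_neg_two_mul_lt hx.ne']
end

section
/- Let λ < 0 be real and define f_λ : ℝ → ℝ by f_λ(x) = λ/(1 − e^{−2x}) (with any convention at x = 0, which the orbit never reaches). Then for every x > 0, the even iterates (f_λ ∘ f_λ)^[n](x) tend to 0 as n → ∞, and the subsequent odd iterates f_λ((f_λ ∘ f_λ)^[n](x)) tend to −∞ as n → ∞. (Thus for λ < 0 the asymptotic value λ is attracted to the zero virtual cycle {0, −∞}.) -/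
/-!
Write `c = -λ > 0`. Since `1 - e^{-2z} ≤ 2z`, a point `z > 0` is sent to `f z ≤ -c/(2z) < 0`, and a
point `y < 0` is sent to `c/(e^{-2y} - 1) > 0`. Combining this with `e^t - 1 ≥ t + t²/2` gives
`0 < f (f z) ≤ 2z²/(2z + c)`, so on `(0, x]` the map `f ∘ f` contracts towards `0` by the factor
`2x/(2x + c) < 1`. The even iterates therefore decay geometrically to `0⁺`, and the odd iterates,
bounded above by `-c/(2 · (f ∘ f)^[n] x)`, tend to `-∞`.
-/

open Filter Topology

lemma tendsto_iterate_nhdsGT_zero_of_le_mul {g : ℝ → ℝ} {a q : ℝ} (hq : q < 1)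
    (hg : ∀ z, 0 < z → z ≤ a → 0 < g z ∧ g z ≤ q * z) {x : ℝ} (hx : 0 < x) (hxa : x ≤ a) :
    Tendsto (fun n => g^[n] x) atTop (𝓝[>] 0) := by
  have hq0 : 0 ≤ q := by
    obtain ⟨hgx, hgxq⟩ := hg x hx hxa
    exact (pos_of_mul_pos_left (hgx.trans_le hgxq) hx.le).le
  have hbound : ∀ n, 0 < g^[n] x ∧ g^[n] x ≤ q ^ n * x := by
    intro n
    induction n with
    | zero => simpa using hx
    | succ n ih =>
      have hle_a : g^[n] x ≤ a :=
        ih.2.trans <| (mul_le_of_le_one_left hx.le (pow_le_one₀ hq0 hq.le)).trans hxa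
      obtain ⟨hpos, hle⟩ := hg _ ih.1 hle_a
      rw [Function.iterate_succ_apply']
      refine ⟨hpos, hle.trans ?_⟩
      calc q * g^[n] x ≤ q * (q ^ n * x) := mul_le_mul_of_nonneg_left ih.2 hq0
        _ = q ^ (n + 1) * x := by ring
  have hgeom : Tendsto (fun n => q ^ n * x) atTop (𝓝 0) := by
    simpa using (tendsto_pow_atTop_nhds_zero_of_lt_one hq0 hq).mul_const x
  refine tendsto_nhdsWithin_iff.mpr ⟨?_, Eventually.of_forall fun n => (hbound n).1⟩
  exact tendsto_of_tendsto_of_tendsto_of_le_of_le tendsto_const_nhds hgeom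
    (fun n => (hbound n).1.le) (fun n => (hbound n).2)

lemma div_exp_sub_one_le {c z t : ℝ} (hc : 0 < c) (hz : 0 < z) (ht : c / z ≤ t) :
    c / (Real.exp t - 1) ≤ 2 * z ^ 2 / (2 * z + c) := by
  have hcz : 0 < c / z := div_pos hc hz
  have hexp : c / z + (c / z) ^ 2 / 2 ≤ Real.exp t - 1 := by
    have := Real.quadratic_le_exp_of_nonneg (hcz.le.trans ht)
    nlinarith
  have hpos : 0 < c / z + (c / z) ^ 2 / 2 := by positivity
  calc c / (Real.exp t - 1) ≤ c / (c / z + (c / z) ^ 2 / 2) :=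
        div_le_div_of_nonneg_left hc.le hpos hexp
    _ = 2 * z ^ 2 / (2 * z + c) := by field_simp

section
variable {lam : ℝ} {f : ℝ → ℝ}

lemma apply_le_div_two_mul_of_pos (hlam : lam < 0)
    (hf : ∀ x : ℝ, x ≠ 0 → f x = lam / (1 - Real.exp (-2 * x))) {z : ℝ} (hz : 0 < z) :
    f z ≤ lam / (2 * z) := by
  have hden : 0 < 1 - Real.exp (-2 * z) := by
    have : Real.exp (-2 * z) < 1 := Real.exp_lt_one_iff.mpr (by linarith)
    linarith
  have hden_le : 1 - Real.exp (-2 * z) ≤ 2 * z := by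
    have := Real.add_one_le_exp (-2 * z)
    linarith
  rw [hf z hz.ne', div_le_div_iff₀ hden (by positivity)]
  nlinarith

lemma apply_apply_pos_and_le_mul (hlam : lam < 0)
    (hf : ∀ x : ℝ, x ≠ 0 → f x = lam / (1 - Real.exp (-2 * x))) {x z : ℝ} (hz : 0 < z)
    (hzx : z ≤ x) : 0 < f (f z) ∧ f (f z) ≤ 2 * x / (2 * x - lam) * z := by
  have hy := apply_le_div_two_mul_of_pos hlam hf hz
  have hy0 : f z < 0 := hy.trans_lt (div_neg_of_neg_of_pos hlam (by positivity))
  have hexp : 1 < Real.exp (-2 * f z) := Real.one_lt_exp_iff.mpr (by linarith)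
  have hffz : f (f z) = -lam / (Real.exp (-2 * f z) - 1) := by
    rw [hf _ hy0.ne, ← neg_sub, div_neg, neg_div]
  have ht : -lam / z ≤ -2 * f z := by
    rw [le_div_iff₀ (by positivity)] at hy
    rw [div_le_iff₀ hz]
    linarith
  refine ⟨hffz ▸ div_pos (neg_pos.mpr hlam) (by linarith), ?_⟩
  calc f (f z) ≤ 2 * z ^ 2 / (2 * z + -lam) := hffz ▸ div_exp_sub_one_le (by linarith) hz ht
    _ = 2 * z / (2 * z - lam) * z := by rw [← sub_eq_add_neg]; ring
    _ ≤ 2 * x / (2 * x - lam) * z := by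
      gcongr ?_ * z
      rw [div_le_div_iff₀ (by linarith) (by linarith)]
      nlinarith

end

/-- For real λ < 0 and f_λ(x) = λ/(1 − e^{−2x}), for every x > 0 the even iterates
(f_λ ∘ f_λ)^[n](x) tend to 0 and the subsequent odd iterates tend to −∞. -/
theorem escape_to_zero_virtual_cycle (lam : ℝ) (hlam : lam < 0)
    (f : ℝ → ℝ) (hf : ∀ x : ℝ, x ≠ 0 → f x = lam / (1 - Real.exp (-2 * x)))
    (x : ℝ) (hx : 0 < x) :
    Tendsto (fun n : ℕ => (f ∘ f)^[n] x) atTop (𝓝 0) ∧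
    Tendsto (fun n : ℕ => f ((f ∘ f)^[n] x)) atTop atBot := by
  have hratio : 2 * x / (2 * x - lam) < 1 := by
    rw [div_lt_one (by linarith)]
    linarith
  have heven : Tendsto (fun n => (f ∘ f)^[n] x) atTop (𝓝[>] 0) :=
    tendsto_iterate_nhdsGT_zero_of_le_mul hratio
      (fun _ => apply_apply_pos_and_le_mul hlam hf) hx le_rfl
  refine ⟨tendsto_nhds_of_tendsto_nhdsWithin heven, ?_⟩
  have hdiv : Tendsto (fun n => lam / (2 * (f ∘ f)^[n] x)) atTop atBot := by
    have hlam2 : lam / 2 < 0 := by linarith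
    refine ((tendsto_inv_nhdsGT_zero.comp heven).const_mul_atTop_of_neg hlam2).congr fun n => ?_
    simp only [Function.comp_apply]
    ring
  refine tendsto_atBot_mono' _ ?_ hdiv
  filter_upwards [heven.eventually self_mem_nhdsWithin] with n hn
  exact apply_le_div_two_mul_of_pos hlam hf hn
end

section
/- For every λ ∈ ℂ with λ ≠ 0, the function z ↦ f_λ(f_λ(z))·e^{2z} tends to −1/2 as Re z → −∞, where f_λ(z) = λ/(1 − e^{−2z}). (Equivalently, f_λ²(z) ∼ −e^{−2z}/2 in the left asymptotic tract, independently of λ.) -/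
open Filter Topology Complex

/-!
With `u = e^{2z} → 0` we have `w = f_λ(z) = λu/(u - 1) → 0`, and `w ≠ 0` since `λ ≠ 0`. Then
`f_λ(w) · u = (u - 1)/2 · 2w/(1 - e^{-2w})`: the first factor tends to `-1/2` and the second to `1`,
because `1 - e^{-v} ∼ v` as `v → 0`.
-/

noncomputable def fLam (lam z : ℂ) : ℂ := lam / (1 - exp (-2 * z))

theorem Filter.Tendsto.const_mul_nhdsNE {α M₀ : Type*} [MulZeroClass M₀] [NoZeroDivisors M₀]
    [TopologicalSpace M₀] [ContinuousMul M₀] {l : Filter α} {f : α → M₀}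
    (hf : Tendsto f l (𝓝[≠] 0)) {c : M₀} (hc : c ≠ 0) :
    Tendsto (fun x => c * f x) l (𝓝[≠] 0) := by
  obtain ⟨hf₀, hf_ne⟩ := tendsto_nhdsWithin_iff.1 hf
  refine tendsto_nhdsWithin_iff.2 ⟨?_, hf_ne.mono fun x hx => mul_ne_zero hc hx⟩
  simpa using hf₀.const_mul c

theorem Complex.tendsto_exp_ofReal_mul_comap_re_atBot {c : ℝ} (hc : 0 < c) :
    Tendsto (fun z : ℂ => exp (c * z)) (comap re atBot) (𝓝 0) :=
  tendsto_exp_comap_re_atBot.comp <| tendsto_comap_iff.2 <| by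
    simpa [Function.comp_def] using tendsto_comap.const_mul_atBot hc

theorem Complex.tendsto_div_one_sub_exp_neg :
    Tendsto (fun v : ℂ => v / (1 - exp (-v))) (𝓝[≠] 0) (𝓝 1) := by
  have hslope : Tendsto (fun v : ℂ => (exp v - 1) / v) (𝓝[≠] 0) (𝓝 1) := by
    have h := hasDerivAt_iff_tendsto_slope.1 (hasDerivAt_exp 0)
    rw [exp_zero] at h
    exact h.congr fun v => by simp [slope_def_field]
  have hneg : Tendsto (fun v : ℂ => -v) (𝓝[≠] 0) (𝓝[≠] 0) := by
    simpa using tendsto_id.const_mul_nhdsNE (neg_ne_zero.2 (one_ne_zero (α := ℂ)))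
  have h := (hslope.comp hneg).inv₀ one_ne_zero
  rw [inv_one] at h
  refine h.congr fun v => ?_
  rw [Function.comp_apply, inv_div, ← neg_sub 1 (exp (-v)), neg_div_neg_eq]

theorem fLam_eq_mul_exp_div (lam z : ℂ) :
    fLam lam z = lam * exp (2 * z) / (exp (2 * z) - 1) := by
  have hexp : exp (-2 * z) = (exp (2 * z))⁻¹ := by rw [neg_mul, exp_neg]
  rw [fLam, hexp, ← mul_div_mul_right lam _ (exp_ne_zero (2 * z)), sub_mul, one_mul,
    inv_mul_cancel₀ (exp_ne_zero _)]

theorem tendsto_fLam_comap_re_atBot {lam : ℂ} (hlam : lam ≠ 0) :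
    Tendsto (fLam lam) (comap re atBot) (𝓝[≠] 0) := by
  have hu : Tendsto (fun z : ℂ => exp (2 * z)) (comap re atBot) (𝓝 0) := by
    simpa using tendsto_exp_ofReal_mul_comap_re_atBot two_pos
  have hcont : Tendsto (fun u : ℂ => lam * u / (u - 1)) (𝓝 0) (𝓝 0) := by
    have : ContinuousAt (fun u : ℂ => lam * u / (u - 1)) 0 := by fun_prop (disch := norm_num)
    simpa using this.tendsto
  refine tendsto_nhdsWithin_iff.2 ⟨?_, ?_⟩
  · simpa only [Function.comp_def, ← fLam_eq_mul_exp_div] using hcont.comp hu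
  · filter_upwards [hu.eventually (eventually_ne_nhds zero_ne_one)] with z hz
    rw [fLam_eq_mul_exp_div]
    exact div_ne_zero (mul_ne_zero hlam (exp_ne_zero _)) (sub_ne_zero.2 hz)

theorem fLam_fLam_mul_exp {lam z : ℂ} (hz : exp (2 * z) ≠ 1) :
    fLam lam (fLam lam z) * exp (2 * z) =
      (exp (2 * z) - 1) / 2 * (2 * fLam lam z / (1 - exp (-(2 * fLam lam z)))) := by
  have hden : exp (2 * z) - 1 ≠ 0 := sub_ne_zero.2 hz
  rw [fLam, ← neg_mul, fLam_eq_mul_exp_div]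
  field_simp

/-- For λ ≠ 0, f_λ(f_λ(z))·e^{2z} → −1/2 as Re z → −∞, where f_λ(z) = λ/(1 − e^{−2z}). -/
theorem second_iterate_left_tract (lam : ℂ) (hlam : lam ≠ 0) :
    Tendsto
      (fun z : ℂ =>
        lam / (1 - Complex.exp (-2 * (lam / (1 - Complex.exp (-2 * z))))) *
          Complex.exp (2 * z))
      (comap Complex.re atBot) (𝓝 (-1 / 2)) := by
  have hu : Tendsto (fun z : ℂ => exp (2 * z)) (comap re atBot) (𝓝 0) := by
    simpa using tendsto_exp_ofReal_mul_comap_re_atBot two_pos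
  have hratio := tendsto_div_one_sub_exp_neg.comp
    ((tendsto_fLam_comap_re_atBot hlam).const_mul_nhdsNE two_ne_zero)
  have hlim := ((hu.sub_const 1).div_const 2).mul hratio
  rw [zero_sub, mul_one] at hlim
  refine hlim.congr' ?_
  filter_upwards [hu.eventually (eventually_ne_nhds zero_ne_one)] with z hz
  exact (fLam_fLam_mul_exp hz).symm
end

section
/- Let λ ∈ ℂ, λ ≠ 0, and let f_λ(z) = λ/(1 − e^{−2z}). Along the asymptotic path γ(t) = −t (t real, t → +∞): f_λ(γ(t)) → 0, Re f_λ²(γ(t)) → −∞, and f_λ³(γ(t)) → 0. (Thus every f_λ in the family has a zero virtual cycle {−∞, 0} of minimal period 2.) -/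
/-!
Along `γ(t) = -t` the denominator `1 - e^{2t}` blows up, so `w = f(γ(t)) → 0`. Near `0` one has
`1 - e^{-2w} ≈ 2w`, hence `f(w) ≈ λ / (2w) = (1 - e^{2t}) / 2`, whose real part tends to `-∞`.
Then `e^{-2 f²(γ(t))}` blows up in turn and `f³(γ(t)) → 0` exactly as in the first step.
-/

open Filter Topology Complex

lemma tendsto_div_one_sub_exp_of_re_tendsto_atTop {α : Type*} {l : Filter α} {g : α → ℂ}
    (c : ℂ) (hg : Tendsto (fun x => (g x).re) l atTop) :
    Tendsto (fun x => c / (1 - exp (g x))) l (𝓝 0) := by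
  have hexp : Tendsto (fun x => exp (g x)) l (Bornology.cobounded ℂ) := by
    rw [← tendsto_norm_atTop_iff_cobounded]
    simp only [norm_exp]
    exact Real.tendsto_exp_atTop.comp hg
  have hden := (tendsto_const_sub_cobounded (1 : ℂ)).comp hexp
  simpa [div_eq_mul_inv] using (tendsto_inv₀_cobounded.comp hden).const_mul c

lemma tendsto_self_div_one_sub_exp_mul {a : ℂ} (ha : a ≠ 0) :
    Tendsto (fun w : ℂ => w / (1 - exp (a * w))) (𝓝[≠] 0) (𝓝 (-a)⁻¹) := by
  have hderiv : HasDerivAt (fun w : ℂ => 1 - exp (a * w)) (-a) 0 := by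
    simpa using ((hasDerivAt_id (0 : ℂ)).const_mul a).cexp.const_sub 1
  simpa [slope_def_field, inv_div] using
    (hasDerivAt_iff_tendsto_slope.mp hderiv).inv₀ (neg_ne_zero.mpr ha)

lemma tendsto_re_div_one_sub_exp_neg_two_mul_div_atBot {α : Type*} {l : Filter α} {r : α → ℝ}
    {c : ℂ} (hc : c ≠ 0) (hr : Tendsto r l atBot) :
    Tendsto (fun x => (c / (1 - exp (-2 * (c / r x)))).re) l atBot := by
  have hr_ne : ∀ᶠ x in l, r x ≠ 0 := (hr.eventually_lt_atBot 0).mono fun _ h => h.ne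
  have hw : Tendsto (fun x => c / r x) l (𝓝[≠] 0) := by
    refine tendsto_nhdsWithin_iff.mpr
      ⟨?_, hr_ne.mono fun x hx => div_ne_zero hc (ofReal_ne_zero.mpr hx)⟩
    have hr_cobounded : Tendsto (fun x => (r x : ℂ)) l (Bornology.cobounded ℂ) := by
      rw [← tendsto_norm_atTop_iff_cobounded]
      simp only [norm_real, Real.norm_eq_abs]
      exact tendsto_abs_atBot_atTop.comp hr
    simpa [div_eq_mul_inv] using (tendsto_inv₀_cobounded.comp hr_cobounded).const_mul c
  have hq : Tendsto (fun x => ((c / r x) / (1 - exp (-2 * (c / r x)))).re) l (𝓝 (1 / 2)) := by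
    have := (continuous_re.tendsto _).comp
      ((tendsto_self_div_one_sub_exp_mul (by norm_num : (-2 : ℂ) ≠ 0)).comp hw)
    rwa [show (-(-2 : ℂ))⁻¹.re = 1 / 2 by norm_num] at this
  have h_factor : ∀ᶠ x in l, r x * ((c / r x) / (1 - exp (-2 * (c / r x)))).re =
      (c / (1 - exp (-2 * (c / r x)))).re := by
    filter_upwards [hr_ne] with x hx
    rw [← re_ofReal_mul, mul_div_assoc', mul_div_cancel₀ _ (ofReal_ne_zero.mpr hx)]
  exact (hr.atBot_mul_pos (by norm_num) hq).congr' h_factor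

/-- For λ ≠ 0 and f_λ(z) = λ/(1 − e^{−2z}), along γ(t) = −t (t → +∞):
f_λ(γ(t)) → 0, Re f_λ²(γ(t)) → −∞, and f_λ³(γ(t)) → 0: the zero virtual cycle. -/
theorem zero_virtual_cycle (lam : ℂ) (hlam : lam ≠ 0)
    (f : ℂ → ℂ) (hf : ∀ z : ℂ, f z = lam / (1 - Complex.exp (-2 * z))) :
    Tendsto (fun t : ℝ => f (-(t : ℂ))) atTop (𝓝 0) ∧
    Tendsto (fun t : ℝ => (f (f (-(t : ℂ)))).re) atTop atBot ∧
    Tendsto (fun t : ℝ => f (f (f (-(t : ℂ))))) atTop (𝓝 0) := by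
  have h_first : Tendsto (fun t : ℝ => f (-(t : ℂ))) atTop (𝓝 0) := by
    refine (tendsto_div_one_sub_exp_of_re_tendsto_atTop lam ?_).congr fun t => (hf _).symm
    simpa using tendsto_id.const_mul_atTop two_pos
  have h_second : Tendsto (fun t : ℝ => (f (f (-(t : ℂ)))).re) atTop atBot := by
    have hf_path (t : ℝ) : f (-(t : ℂ)) = lam / ((1 - Real.exp (2 * t) : ℝ) : ℂ) := by
      rw [hf]; push_cast; ring_nf
    have h_denom : Tendsto (fun t : ℝ => 1 - Real.exp (2 * t)) atTop atBot := by
      have h_exp : Tendsto (fun t : ℝ => Real.exp (2 * t)) atTop atTop :=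
        Real.tendsto_exp_atTop.comp (tendsto_id.const_mul_atTop two_pos)
      simpa [sub_eq_add_neg] using
        tendsto_atBot_add_const_left atTop 1 (tendsto_neg_atTop_atBot.comp h_exp)
    simp only [hf_path, hf]
    exact tendsto_re_div_one_sub_exp_neg_two_mul_div_atBot hlam h_denom
  refine ⟨h_first, h_second, ?_⟩
  refine (tendsto_div_one_sub_exp_of_re_tendsto_atTop lam ?_).congr fun t => (hf _).symm
  simpa using h_second.const_mul_atBot_of_neg (by norm_num : (-2 : ℝ) < 0)
end
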